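/- In Twyst-off, for every integer a ≥ 3, the position (a, a+1, a) is a P position. -/
import Mathlib



namespace TwystOff

/-- Contraction: merge the two neighbors of an interior zero stack; delete empty end stacks. -/
def contract : List ℕ → List ℕ
  | [] => []
  | a :: t =>
    if a = 0 then contract t
    else match t with
      | [] => [a]
      | [b] => if b = 0 then [a] else [a, b]
      | b :: c :: r => if b = 0 then contract ((a + c) :: r) else a :: contract (b :: c :: r)
termination_by l => l.length

theorem contract_sum (l : List ℕ) : (contract l).sum = l.sum := by
  induction l using contract.induct <;> rw [contract.eq_def] <;> simp_all <;> omega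

/-- A raw move: remove `k > 0` tiles from an end stack, or `k` tiles from each of two
consecutive stacks; the result is then contracted. -/
def premove (p q : List ℕ) : Prop :=
  (∃ a t k, p = a :: t ∧ 0 < k ∧ k ≤ a ∧ q = contract ((a - k) :: t)) ∨
  (∃ a t k, p = t ++ [a] ∧ 0 < k ∧ k ≤ a ∧ q = contract (t ++ [a - k])) ∨
  (∃ α a b β k, p = α ++ a :: b :: β ∧ 0 < k ∧ k ≤ a ∧ k ≤ b ∧
      q = contract (α ++ (a - k) :: (b - k) :: β))

/-- Moves of Twyst-off (positions are considered up to contraction). -/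
def Move (p q : List ℕ) : Prop := premove (contract p) q

theorem Move.sum_lt {p q : List ℕ} (h : Move p q) : q.sum < p.sum := by
  rw [← contract_sum p]
  rcases h with ⟨a, t, k, hp, hk, hka, hq⟩ | ⟨a, t, k, hp, hk, hka, hq⟩ |
    ⟨α, a, b, β, k, hp, hk, hka, hkb, hq⟩ <;>
    subst hq <;> rw [contract_sum, hp] <;> simp [List.sum_append] <;> omega

/-- P positions: every option is an N position (i.e. no option is itself P). -/
def PPos (p : List ℕ) : Prop := ∀ q, Move p q → ¬ PPos q
termination_by p.sum
decreasing_by exact Move.sum_lt (by assumption)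

/-- N positions: some option is a P position. -/
def NPos (p : List ℕ) : Prop := ∃ q, Move p q ∧ PPos q

-- helpers
theorem PPos_iff (p : List ℕ) : PPos p ↔ ∀ q, Move p q → ¬ PPos q := by rw [PPos]

theorem c0 : contract [] = [] := by rw [contract.eq_def]
theorem czc (t : List ℕ) : contract (0 :: t) = contract t := by rw [contract.eq_def]; simp
theorem c1 (x : ℕ) (hx : x ≠ 0) : contract [x] = [x] := by rw [contract.eq_def]; simp [hx]
theorem c2 (x y : ℕ) (hx : x ≠ 0) (hy : y ≠ 0) : contract [x,y] = [x,y] := by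
  rw [contract.eq_def]; simp [hx, hy]
theorem c3 (x y z : ℕ) (hx : x ≠ 0) (hy : y ≠ 0) (hz : z ≠ 0) :
    contract [x,y,z] = [x,y,z] := by rw [contract.eq_def]; simp [hx, hy, c2 y z hy hz]
theorem c2z (x : ℕ) (hx : x ≠ 0) : contract [x,0] = [x] := by rw [contract.eq_def]; simp [hx]
theorem c3z (x y : ℕ) (hx : x ≠ 0) (hy : y ≠ 0) : contract [x,y,0] = [x,y] := by
  rw [contract.eq_def]; simp [hx, hy, c2z y hy]
theorem cmz (x z : ℕ) (r : List ℕ) (hx : x ≠ 0) :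
    contract (x :: 0 :: z :: r) = contract ((x+z) :: r) := by
  rw [contract.eq_def]; simp [hx]

theorem mleft {p : List ℕ} (a : ℕ) (t : List ℕ) (k : ℕ) (hp : contract p = a :: t)
    (hk : 0 < k) (hka : k ≤ a) : Move p (contract ((a-k)::t)) :=
  Or.inl ⟨a,t,k,hp,hk,hka,rfl⟩
theorem mright {p : List ℕ} (a : ℕ) (t : List ℕ) (k : ℕ) (hp : contract p = t ++ [a])
    (hk : 0 < k) (hka : k ≤ a) : Move p (contract (t ++ [a-k])) :=
  Or.inr (Or.inl ⟨a,t,k,hp,hk,hka,rfl⟩)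
theorem mpair {p : List ℕ} (α : List ℕ) (a b : ℕ) (β : List ℕ) (k : ℕ)
    (hp : contract p = α ++ a :: b :: β) (hk : 0 < k) (hka : k ≤ a) (hkb : k ≤ b) :
    Move p (contract (α ++ (a-k) :: (b-k) :: β)) :=
  Or.inr (Or.inr ⟨α,a,b,β,k,hp,hk,hka,hkb,rfl⟩)

theorem notP {p q : List ℕ} (h : Move p q) (hq : PPos q) : ¬ PPos p :=
  fun hp => (PPos_iff p).mp hp q h hq

theorem move3_cases {x y z : ℕ} (hx : x ≠ 0) (hy : y ≠ 0) (hz : z ≠ 0) {q : List ℕ}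
    (h : Move [x,y,z] q) :
    (∃ k, 0 < k ∧ k ≤ x ∧ q = contract [x-k,y,z]) ∨
    (∃ k, 0 < k ∧ k ≤ z ∧ q = contract [x,y,z-k]) ∨
    (∃ k, 0 < k ∧ k ≤ x ∧ k ≤ y ∧ q = contract [x-k,y-k,z]) ∨
    (∃ k, 0 < k ∧ k ≤ y ∧ k ≤ z ∧ q = contract [x,y-k,z-k]) := by
  rw [Move, c3 x y z hx hy hz] at h
  rcases h with ⟨a, t, k, hp, hk, hka, hq⟩ | ⟨a, t, k, hp, hk, hka, hq⟩ |
    ⟨α, a, b, β, k, hp, hk, hka, hkb, hq⟩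
  · obtain ⟨rfl, rfl⟩ : x = a ∧ [y,z] = t := by simpa using hp
    exact Or.inl ⟨k, hk, hka, hq⟩
  · rcases t with _ | ⟨u, _ | ⟨v, _ | ⟨w, t⟩⟩⟩
    · exfalso; simpa using congrArg List.length hp
    · exfalso; simpa using congrArg List.length hp
    · obtain ⟨rfl, rfl, rfl⟩ : x = u ∧ y = v ∧ z = a := by simpa using hp
      exact Or.inr (Or.inl ⟨k, hk, hka, hq⟩)
    · exfalso; have := congrArg List.length hp; simp at this <;> omega
  · rcases α with _ | ⟨u, _ | ⟨v, α⟩⟩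
    · obtain ⟨rfl, rfl, h3⟩ : x = a ∧ y = b ∧ [z] = β := by simpa using hp
      rw [← h3] at hq
      exact Or.inr (Or.inr (Or.inl ⟨k, hk, hka, hkb, hq⟩))
    · obtain ⟨rfl, rfl, rfl, h4⟩ : x = u ∧ y = a ∧ z = b ∧ ([] : List ℕ) = β := by
        simpa using hp
      rw [← h4] at hq
      exact Or.inr (Or.inr (Or.inr ⟨k, hk, hka, hkb, hq⟩))
    · exfalso; have := congrArg List.length hp; simp at this <;> omega

theorem move2_cases {x y : ℕ} (hx : x ≠ 0) (hy : y ≠ 0) {q : List ℕ}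
    (h : Move [x,y] q) :
    (∃ k, 0 < k ∧ k ≤ x ∧ q = contract [x-k,y]) ∨
    (∃ k, 0 < k ∧ k ≤ y ∧ q = contract [x,y-k]) ∨
    (∃ k, 0 < k ∧ k ≤ x ∧ k ≤ y ∧ q = contract [x-k,y-k]) := by
  rw [Move, c2 x y hx hy] at h
  rcases h with ⟨a, t, k, hp, hk, hka, hq⟩ | ⟨a, t, k, hp, hk, hka, hq⟩ |
    ⟨α, a, b, β, k, hp, hk, hka, hkb, hq⟩
  · obtain ⟨rfl, rfl⟩ : x = a ∧ [y] = t := by simpa using hp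
    exact Or.inl ⟨k, hk, hka, hq⟩
  · rcases t with _ | ⟨u, _ | ⟨v, t⟩⟩
    · exfalso; simpa using congrArg List.length hp
    · obtain ⟨rfl, rfl⟩ : x = u ∧ y = a := by simpa using hp
      exact Or.inr (Or.inl ⟨k, hk, hka, hq⟩)
    · exfalso; have := congrArg List.length hp; simp at this <;> omega
  · rcases α with _ | ⟨u, α⟩
    · obtain ⟨rfl, rfl, h3⟩ : x = a ∧ y = b ∧ ([] : List ℕ) = β := by simpa using hp
      rw [← h3] at hq
      exact Or.inr (Or.inr ⟨k, hk, hka, hkb, hq⟩)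
    · exfalso; have := congrArg List.length hp; simp at this <;> omega

theorem move1_cases {x : ℕ} (hx : x ≠ 0) {q : List ℕ} (h : Move [x] q) :
    ∃ k, 0 < k ∧ k ≤ x ∧ q = contract [x-k] := by
  rw [Move, c1 x hx] at h
  rcases h with ⟨a, t, k, hp, hk, hka, hq⟩ | ⟨a, t, k, hp, hk, hka, hq⟩ |
    ⟨α, a, b, β, k, hp, hk, hka, hkb, hq⟩
  · obtain ⟨rfl, h3⟩ : x = a ∧ ([] : List ℕ) = t := by simpa using hp
    rw [← h3] at hq
    exact ⟨k, hk, hka, hq⟩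
  · rcases t with _ | ⟨u, t⟩
    · obtain rfl : x = a := by simpa using hp
      exact ⟨k, hk, hka, hq⟩
    · exfalso; have := congrArg List.length hp; simp at this <;> omega
  · exfalso
    have := congrArg List.length hp; simp at this <;> omega

theorem P_nil : PPos [] := by
  rw [PPos_iff]; intro q hq
  rw [Move, c0] at hq
  rcases hq with ⟨a, t, k, hp, -⟩ | ⟨a, t, k, hp, -⟩ | ⟨α, a, b, β, k, hp, -⟩ <;>
    {
    have := congrArg List.length hp; simp at this <;> omega }

theorem notP_single (x : ℕ) (hx : x ≠ 0) : ¬ PPos [x] := by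
  have h := mleft (p := [x]) x [] x (c1 x hx) (Nat.pos_of_ne_zero hx) le_rfl
  rw [show x - x = 0 from by omega, czc, c0] at h
  exact notP h P_nil

theorem notP_11 : ¬ PPos [1,1] := by
  have h := mpair (p := [1,1]) [] 1 1 [] 1 (by norm_num [c2]) one_pos le_rfl le_rfl
  norm_num [czc, c0] at h
  exact notP h P_nil

theorem notP_22 : ¬ PPos [2,2] := by
  have h := mpair (p := [2,2]) [] 2 2 [] 2 (by norm_num [c2]) two_pos le_rfl le_rfl
  norm_num [czc, c0] at h
  exact notP h P_nil

theorem P12 : PPos [1,2] := by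
  rw [PPos_iff]; intro q hq
  rcases move2_cases one_ne_zero two_ne_zero hq with ⟨k,hk,hka,rfl⟩|⟨k,hk,hka,rfl⟩|⟨k,hk,hka,hkb,rfl⟩
  · interval_cases k
    norm_num [czc, c1]
    exact notP_single 2 two_ne_zero
  · interval_cases k
    · norm_num [c2]
      exact notP_11
    · norm_num [c2z]
      exact notP_single 1 one_ne_zero
  · interval_cases k
    norm_num [czc, c1]
    exact notP_single 1 one_ne_zero

theorem P21 : PPos [2,1] := by
  rw [PPos_iff]; intro q hq
  rcases move2_cases two_ne_zero one_ne_zero hq with ⟨k,hk,hka,rfl⟩|⟨k,hk,hka,rfl⟩|⟨k,hk,hka,hkb,rfl⟩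
  · interval_cases k
    · norm_num [c2]
      exact notP_11
    · norm_num [czc, c1]
      exact notP_single 1 one_ne_zero
  · interval_cases k
    norm_num [c2z]
    exact notP_single 2 two_ne_zero
  · interval_cases k
    norm_num [czc, c2z, c1]
    exact notP_single 1 one_ne_zero

theorem notP_13 : ¬ PPos [1,3] := by
  have h := mright (p := [1,3]) 3 [1] 1 (by norm_num [c2]) one_pos (by norm_num)
  norm_num [c2] at h
  exact notP h P12

theorem notP_31 : ¬ PPos [3,1] := by
  have h := mleft (p := [3,1]) 3 [1] 1 (by norm_num [c2]) one_pos (by norm_num)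
  norm_num [c2] at h
  exact notP h P21

theorem notP_23 : ¬ PPos [2,3] := by
  have h := mpair (p := [2,3]) [] 2 3 [] 1 (by norm_num [c2]) one_pos (by norm_num) (by norm_num)
  norm_num [c2] at h
  exact notP h P12

theorem notP_32 : ¬ PPos [3,2] := by
  have h := mpair (p := [3,2]) [] 3 2 [] 1 (by norm_num [c2]) one_pos (by norm_num) (by norm_num)
  norm_num [c2] at h
  exact notP h P21

theorem notP_121 : ¬ PPos [1,2,1] := by
  have h := mright (p := [1,2,1]) 1 [1,2] 1 (by norm_num [c3]) one_pos le_rfl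
  norm_num [c3z, c2] at h
  exact notP h P12

theorem notP_131 : ¬ PPos [1,3,1] := by
  have h := mpair (p := [1,3,1]) [1] 3 1 [] 1 (by norm_num [c3]) one_pos (by norm_num) le_rfl
  norm_num [c3z] at h
  exact notP h P12

theorem P231 : PPos [2,3,1] := by
  rw [PPos_iff]; intro q hq
  rcases move3_cases two_ne_zero three_ne_zero one_ne_zero hq with
    ⟨k,hk,hka,rfl⟩|⟨k,hk,hka,rfl⟩|⟨k,hk,hka,hkb,rfl⟩|⟨k,hk,hka,hkb,rfl⟩
  · interval_cases k
    · norm_num [c3]; exact notP_131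
    · norm_num [czc, c2]; exact notP_31
  · interval_cases k
    norm_num [c3z]; exact notP_23
  · interval_cases k
    · norm_num [c3]; exact notP_121
    · norm_num [czc, c2]; exact notP_11
  · interval_cases k
    norm_num [c3z]; exact notP_22

theorem P132 : PPos [1,3,2] := by
  rw [PPos_iff]; intro q hq
  rcases move3_cases one_ne_zero three_ne_zero two_ne_zero hq with
    ⟨k,hk,hka,rfl⟩|⟨k,hk,hka,rfl⟩|⟨k,hk,hka,hkb,rfl⟩|⟨k,hk,hka,hkb,rfl⟩
  · interval_cases k
    norm_num [czc, c2]; exact notP_32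
  · interval_cases k
    · norm_num [c3]; exact notP_131
    · norm_num [c3z]; exact notP_13
  · interval_cases k
    norm_num [czc, c2]; exact notP_22
  · interval_cases k
    · norm_num [c3]; exact notP_121
    · norm_num [c3z]; exact notP_11

theorem master : ∀ a : ℕ, 3 ≤ a → PPos [a, a+1, a] := by
  intro a
  induction a using Nat.strong_induction_on with
  | _ a IH =>
  intro ha
  have hx : a ≠ 0 := by omega
  have hy : a + 1 ≠ 0 := by omega
  rw [PPos_iff]; intro q hq
  rcases move3_cases hx hy hx hq with
    ⟨k,hk,hka,rfl⟩|⟨k,hk,hka,rfl⟩|⟨k,hk,hka,hkb,rfl⟩|⟨k,hk,hka,hkb,rfl⟩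
  -- Case A: left end, q = contract [a-k, a+1, a]
  · rcases (show a - k = 0 ∨ a - k = 1 ∨ a - k = 2 ∨ (3 ≤ a - k ∧ a - k < a) from by omega) with
      hc | hc | hc | ⟨hc, hc'⟩
    · rw [hc, czc, c2 _ _ hy hx]
      have h := mpair (p := [a+1, a]) [] (a+1) a [] (a-1) (c2 _ _ hy hx)
        (by omega) (by omega) (by omega)
      rw [show a + 1 - (a - 1) = 2 from by omega, show a - (a - 1) = 1 from by omega] at h
      norm_num [c2] at h
      exact notP h P21
    · rw [hc, c3 _ _ _ one_ne_zero hy hx]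
      have h := mpair (p := [1, a+1, a]) [1] (a+1) a [] (a-2) (c3 _ _ _ one_ne_zero hy hx)
        (by omega) (by omega) (by omega)
      rw [show a + 1 - (a - 2) = 3 from by omega, show a - (a - 2) = 2 from by omega] at h
      norm_num [c3] at h
      exact notP h P132
    · rw [hc, c3 _ _ _ two_ne_zero hy hx]
      have h := mpair (p := [2, a+1, a]) [2] (a+1) a [] a (c3 _ _ _ two_ne_zero hy hx)
        (by omega) (by omega) (by omega)
      rw [show a + 1 - a = 1 from by omega, Nat.sub_self] at h
      norm_num [c3z] at h
      exact notP h P21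
    · rw [c3 _ _ _ (by omega) hy hx]
      have h := mpair (p := [a-k, a+1, a]) [a-k] (a+1) a [] k (c3 _ _ _ (by omega) hy hx)
        hk (by omega) hka
      rw [show a + 1 - k = (a - k) + 1 from by omega] at h
      simp only [List.cons_append, List.nil_append] at h
      rw [c3 _ _ _ (by omega) (by omega) (by omega)] at h
      exact notP h (IH (a-k) (by omega) (by omega))
  -- Case B: right end, q = contract [a, a+1, a-k]
  · rcases (show a - k = 0 ∨ a - k = 1 ∨ a - k = 2 ∨ (3 ≤ a - k ∧ a - k < a) from by omega) with
      hc | hc | hc | ⟨hc, hc'⟩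
    · rw [hc, c3z _ _ hx hy]
      have h := mpair (p := [a, a+1]) [] a (a+1) [] (a-1) (c2 _ _ hx hy)
        (by omega) (by omega) (by omega)
      rw [show a - (a - 1) = 1 from by omega, show a + 1 - (a - 1) = 2 from by omega] at h
      norm_num [c2] at h
      exact notP h P12
    · rw [hc, c3 _ _ _ hx hy one_ne_zero]
      have h := mpair (p := [a, a+1, 1]) [] a (a+1) [1] (a-2) (c3 _ _ _ hx hy one_ne_zero)
        (by omega) (by omega) (by omega)
      rw [show a - (a - 2) = 2 from by omega, show a + 1 - (a - 2) = 3 from by omega] at h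
      norm_num [c3] at h
      exact notP h P231
    · rw [hc, c3 _ _ _ hx hy two_ne_zero]
      have h := mpair (p := [a, a+1, 2]) [] a (a+1) [2] a (c3 _ _ _ hx hy two_ne_zero)
        (by omega) (by omega) (by omega)
      rw [Nat.sub_self, show a + 1 - a = 1 from by omega] at h
      norm_num [czc, c2] at h
      exact notP h P12
    · rw [c3 _ _ _ hx hy (by omega)]
      have h := mpair (p := [a, a+1, a-k]) [] a (a+1) [a-k] k (c3 _ _ _ hx hy (by omega))
        hk hka (by omega)
      rw [show a + 1 - k = (a - k) + 1 from by omega] at h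
      simp only [List.nil_append] at h
      rw [c3 _ _ _ (by omega) (by omega) (by omega)] at h
      exact notP h (IH (a-k) (by omega) (by omega))
  -- Case C: left pair, q = contract [a-k, a+1-k, a]
  · rcases (show a - k = 0 ∨ a - k = 1 ∨ a - k = 2 ∨ (3 ≤ a - k ∧ a - k < a) from by omega) with
      hc | hc | hc | ⟨hc, hc'⟩
    · rw [hc, show a + 1 - k = 1 from by omega, czc, c2 _ _ one_ne_zero hx]
      have h := mright (p := [1, a]) a [1] (a-2) (c2 _ _ one_ne_zero hx) (by omega) (by omega)
      rw [show a - (a - 2) = 2 from by omega] at h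
      norm_num [c2] at h
      exact notP h P12
    · rw [hc, show a + 1 - k = 2 from by omega, c3 _ _ _ one_ne_zero two_ne_zero hx]
      have h := mright (p := [1, 2, a]) a [1, 2] a (c3 _ _ _ one_ne_zero two_ne_zero hx)
        (by omega) le_rfl
      rw [Nat.sub_self] at h
      norm_num [c3z] at h
      exact notP h P12
    · rw [hc, show a + 1 - k = 3 from by omega, c3 _ _ _ two_ne_zero three_ne_zero hx]
      have h := mright (p := [2, 3, a]) a [2, 3] (a-1) (c3 _ _ _ two_ne_zero three_ne_zero hx)
        (by omega) (by omega)
      rw [show a - (a - 1) = 1 from by omega] at h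
      norm_num [c3] at h
      exact notP h P231
    · rw [show a + 1 - k = (a - k) + 1 from by omega, c3 _ _ _ (by omega) (by omega) hx]
      have h := mright (p := [a-k, a-k+1, a]) a [a-k, a-k+1] k
        (c3 _ _ _ (by omega) (by omega) hx) hk hka
      simp only [List.cons_append, List.nil_append] at h
      rw [c3 _ _ _ (by omega) (by omega) (by omega)] at h
      exact notP h (IH (a-k) (by omega) (by omega))
  -- Case D: right pair, q = contract [a, a+1-k, a-k]
  · rcases (show a - k = 0 ∨ a - k = 1 ∨ a - k = 2 ∨ (3 ≤ a - k ∧ a - k < a) from by omega) with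
      hc | hc | hc | ⟨hc, hc'⟩
    · rw [hc, show a + 1 - k = 1 from by omega, c3z _ _ hx one_ne_zero]
      have h := mleft (p := [a, 1]) a [1] (a-2) (c2 _ _ hx one_ne_zero) (by omega) (by omega)
      rw [show a - (a - 2) = 2 from by omega] at h
      norm_num [c2] at h
      exact notP h P21
    · rw [hc, show a + 1 - k = 2 from by omega, c3 _ _ _ hx two_ne_zero one_ne_zero]
      have h := mleft (p := [a, 2, 1]) a [2, 1] a (c3 _ _ _ hx two_ne_zero one_ne_zero)
        (by omega) le_rfl
      rw [Nat.sub_self] at h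
      norm_num [czc, c2] at h
      exact notP h P21
    · rw [hc, show a + 1 - k = 3 from by omega, c3 _ _ _ hx three_ne_zero two_ne_zero]
      have h := mleft (p := [a, 3, 2]) a [3, 2] (a-1) (c3 _ _ _ hx three_ne_zero two_ne_zero)
        (by omega) (by omega)
      rw [show a - (a - 1) = 1 from by omega] at h
      norm_num [c3] at h
      exact notP h P132
    · rw [show a + 1 - k = (a - k) + 1 from by omega, c3 _ _ _ hx (by omega) (by omega)]
      have h := mleft (p := [a, a-k+1, a-k]) a [a-k+1, a-k] k
        (c3 _ _ _ hx (by omega) (by omega)) hk hkb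
      rw [c3 _ _ _ (by omega) (by omega) (by omega)] at h
      exact notP h (IH (a-k) (by omega) (by omega))

end TwystOff


theorem a_succ_a_P (a : ℕ) (ha : 3 ≤ a) : TwystOff.PPos [a, a + 1, a] :=
  TwystOff.master a ha
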